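/- arXiv:1003.4569 — 10 statements merged into one kernel-verified Lean document; each statement's English description precedes it below -/
import Mathlib

section
/- Every regular tetrahedron in ℤ³ can be completed to a cube in ℤ³: for every regular tetrahedron T in ℤ³ there exists a cube C in ℤ³ such that the vertex set of T is contained in the vertex set of C. -/
/-- Dot product of integer vectors in `ℤ³`. -/
def dot3 (u v : Fin 3 → ℤ) : ℤ := ∑ i, u i * v i

/-- Squared Euclidean distance between two points of `ℤ³`. -/
def distSq (u v : Fin 3 → ℤ) : ℤ := dot3 (u - v) (u - v)

/-- A regular tetrahedron in `ℤ³`: four points with equal nonzero pairwise distances. -/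
def IsRegularTetrahedron (T : Set (Fin 3 → ℤ)) : Prop :=
  T.ncard = 4 ∧ ∃ s : ℤ, 0 < s ∧ ∀ u ∈ T, ∀ v ∈ T, u ≠ v → distSq u v = s

/-- A cube in `ℤ³`: the eight points `v + ε₁e₁ + ε₂e₂ + ε₃e₃`, `εᵢ ∈ {0,1}`,
where `e₁, e₂, e₃` are pairwise orthogonal of equal nonzero length. -/
def IsCube (C : Set (Fin 3 → ℤ)) : Prop :=
  ∃ v e₁ e₂ e₃ : Fin 3 → ℤ,
    dot3 e₁ e₂ = 0 ∧ dot3 e₁ e₃ = 0 ∧ dot3 e₂ e₃ = 0 ∧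
    dot3 e₁ e₁ = dot3 e₂ e₂ ∧ dot3 e₂ e₂ = dot3 e₃ e₃ ∧ dot3 e₁ e₁ ≠ 0 ∧
    C = {p | ∃ ε₁ ε₂ ε₃ : ℤ, ε₁ ∈ ({0, 1} : Set ℤ) ∧ ε₂ ∈ ({0, 1} : Set ℤ) ∧
      ε₃ ∈ ({0, 1} : Set ℤ) ∧ p = v + ε₁ • e₁ + ε₂ • e₂ + ε₃ • e₃}

/-! Let `a` be a vertex and `u, v, w` the edge vectors from `a` to the other three vertices,
so that `u ⬝ u = v ⬝ v = w ⬝ w = 2t` and `u ⬝ v = u ⬝ w = v ⬝ w = t`. Then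
`|u + v + w|² = 12t` is divisible by `4`, and since a sum of three squares is divisible by `4`
only when all three are even, `u + v + w = 2m` for an integer vector `m`. The vectors
`m - u`, `m - v`, `m - w` are pairwise orthogonal of squared length `t`, and the vertices
`a + u = a + (m - v) + (m - w)`, etc., are vertices of the cube they span at `a`. -/

theorem Int.even_of_four_dvd_sq_add_sq_add_sq {x y z : ℤ} (h : 4 ∣ x ^ 2 + y ^ 2 + z ^ 2) :
    Even x ∧ Even y ∧ Even z := by
  have sq_mod_four (n : ℤ) : (Even n ∧ n ^ 2 % 4 = 0) ∨ (¬Even n ∧ n ^ 2 % 4 = 1) := by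
    rcases Int.even_or_odd n with hn | hn
    · obtain ⟨k, rfl⟩ := hn
      exact .inl ⟨⟨k, rfl⟩, by ring_nf; omega⟩
    · exact .inr ⟨Int.not_even_iff_odd.mpr hn, Int.sq_mod_four_eq_one_of_odd hn⟩
  rcases sq_mod_four x with ⟨hx, _⟩ | ⟨_, _⟩ <;>
  rcases sq_mod_four y with ⟨hy, _⟩ | ⟨_, _⟩ <;>
  rcases sq_mod_four z with ⟨hz, _⟩ | ⟨_, _⟩ <;>
  first
  | exact ⟨hx, hy, hz⟩
  | omega

theorem sub_add_sub_of_two_smul_eq {G : Type*} [AddCommGroup G] {u v w m : G}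
    (hm : 2 • m = u + v + w) : (m - v) + (m - w) = u := by
  rw [← sub_eq_zero, ← sub_eq_zero.mpr hm]
  abel

theorem exists_two_smul_eq_of_four_dvd_dotProduct_self {x : Fin 3 → ℤ} (h : 4 ∣ x ⬝ᵥ x) :
    ∃ m : Fin 3 → ℤ, 2 • m = x := by
  simp only [dotProduct, Fin.sum_univ_three, ← sq] at h
  obtain ⟨⟨m₀, h₀⟩, ⟨m₁, h₁⟩, ⟨m₂, h₂⟩⟩ := Int.even_of_four_dvd_sq_add_sq_add_sq h
  refine ⟨![m₀, m₁, m₂], funext fun i => ?_⟩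
  fin_cases i <;> simp [h₀, h₁, h₂, two_mul]

theorem two_mul_dotProduct_sub_eq_distSq (a b c : Fin 3 → ℤ) :
    2 * ((b - a) ⬝ᵥ (c - a)) = distSq a b + distSq a c - distSq b c := by
  simp only [distSq, dot3, dotProduct, Fin.sum_univ_three, Pi.sub_apply]
  ring

theorem dotProduct_sub_self_eq_distSq (a b : Fin 3 → ℤ) : (b - a) ⬝ᵥ (b - a) = distSq a b := by
  simp only [distSq, dot3, dotProduct, Fin.sum_univ_three, Pi.sub_apply]
  ring

/-- Edge vectors `u, v, w` from one vertex of a regular tetrahedron with squared edge `2 * t`. -/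
structure IsTetrahedronFrame {ι : Type*} [Fintype ι] (t : ℤ) (u v w : ι → ℤ) : Prop where
  self_u : u ⬝ᵥ u = 2 * t
  self_v : v ⬝ᵥ v = 2 * t
  self_w : w ⬝ᵥ w = 2 * t
  u_v : u ⬝ᵥ v = t
  u_w : u ⬝ᵥ w = t
  v_w : v ⬝ᵥ w = t

namespace IsTetrahedronFrame

variable {ι : Type*} [Fintype ι] {t : ℤ} {u v w m : ι → ℤ}

theorem rotate (h : IsTetrahedronFrame t u v w) : IsTetrahedronFrame t v w u :=
  ⟨h.self_v, h.self_w, h.self_u, h.v_w, dotProduct_comm v u ▸ h.u_v, dotProduct_comm w u ▸ h.u_w⟩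

theorem dotProduct_self_add_add (h : IsTetrahedronFrame t u v w) :
    (u + v + w) ⬝ᵥ (u + v + w) = 4 * (3 * t) := by
  simp only [add_dotProduct, dotProduct_add, dotProduct_comm v u, dotProduct_comm w u,
    dotProduct_comm w v, h.self_u, h.self_v, h.self_w, h.u_v, h.u_w, h.v_w]
  ring

theorem dotProduct_self_of_two_smul_eq (h : IsTetrahedronFrame t u v w)
    (hm : 2 • m = u + v + w) : m ⬝ᵥ m = 3 * t := by
  have h4 := h.dotProduct_self_add_add
  rw [← hm, smul_dotProduct, dotProduct_smul, smul_smul, nsmul_eq_mul] at h4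
  push_cast at h4
  linarith

theorem dotProduct_left_of_two_smul_eq (h : IsTetrahedronFrame t u v w)
    (hm : 2 • m = u + v + w) : m ⬝ᵥ u = 2 * t := by
  have h4 : (2 • m) ⬝ᵥ u = 4 * t := by
    rw [hm, add_dotProduct, add_dotProduct, h.self_u, dotProduct_comm v u, dotProduct_comm w u,
      h.u_v, h.u_w]
    ring
  rw [smul_dotProduct, nsmul_eq_mul] at h4
  push_cast at h4
  linarith

theorem sub_dotProduct_sub_of_two_smul_eq (h : IsTetrahedronFrame t u v w)
    (hm : 2 • m = u + v + w) : (m - u) ⬝ᵥ (m - v) = 0 ∧ (m - u) ⬝ᵥ (m - u) = t := by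
  have hmm := h.dotProduct_self_of_two_smul_eq hm
  have hmu := h.dotProduct_left_of_two_smul_eq hm
  have hmv := h.rotate.dotProduct_left_of_two_smul_eq (by rw [hm]; abel)
  simp only [sub_dotProduct, dotProduct_sub, dotProduct_comm u m, hmm, hmu,
    hmv, h.self_u, h.u_v]
  constructor <;> ring

end IsTetrahedronFrame

theorem IsTetrahedronFrame.exists_isCube {t : ℤ} {u v w : Fin 3 → ℤ}
    (h : IsTetrahedronFrame t u v w) (ht : t ≠ 0) (a : Fin 3 → ℤ) :
    ∃ C, IsCube C ∧ a ∈ C ∧ a + u ∈ C ∧ a + v ∈ C ∧ a + w ∈ C := by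
  obtain ⟨m, hm⟩ := exists_two_smul_eq_of_four_dvd_dotProduct_self
    (h.dotProduct_self_add_add ▸ dvd_mul_right 4 (3 * t))
  have hm' : 2 • m = v + w + u := by rw [hm]; abel
  have hm'' : 2 • m = w + u + v := by rw [hm]; abel
  have hm''' : 2 • m = v + u + w := by rw [hm]; abel
  obtain ⟨h₁₂, h₁₁⟩ := h.sub_dotProduct_sub_of_two_smul_eq hm
  obtain ⟨h₂₃, h₂₂⟩ := h.rotate.sub_dotProduct_sub_of_two_smul_eq hm'
  obtain ⟨h₃₁, h₃₃⟩ := h.rotate.rotate.sub_dotProduct_sub_of_two_smul_eq hm''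
  refine ⟨_, ⟨a, m - u, m - v, m - w, h₁₂, (dotProduct_comm _ _).trans h₃₁, h₂₃,
    h₁₁.trans h₂₂.symm, h₂₂.trans h₃₃.symm, h₁₁.trans_ne ht, rfl⟩, ⟨0, 0, 0, ?_⟩, ⟨0, 1, 1, ?_⟩,
    ⟨1, 0, 1, ?_⟩, ⟨1, 1, 0, ?_⟩⟩
  · simp
  · simp [add_assoc, sub_add_sub_of_two_smul_eq hm]
  · simp [add_assoc, sub_add_sub_of_two_smul_eq hm''']
  · simp [add_assoc, sub_add_sub_of_two_smul_eq hm'']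

theorem exists_isTetrahedronFrame_of_distSq_eq {a b c d : Fin 3 → ℤ} {s : ℤ}
    (hab : distSq a b = s) (hac : distSq a c = s) (had : distSq a d = s)
    (hbc : distSq b c = s) (hbd : distSq b d = s) (hcd : distSq c d = s) :
    ∃ t, 2 * t = s ∧ IsTetrahedronFrame t (b - a) (c - a) (d - a) := by
  have hbc' := two_mul_dotProduct_sub_eq_distSq a b c
  have hbd' := two_mul_dotProduct_sub_eq_distSq a b d
  have hcd' := two_mul_dotProduct_sub_eq_distSq a c d
  refine ⟨(b - a) ⬝ᵥ (c - a), by linarith, ⟨?_, ?_, ?_, rfl, by linarith, by linarith⟩⟩ <;>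
    rw [dotProduct_sub_self_eq_distSq] <;> linarith

/-- Every regular tetrahedron in `ℤ³` can be completed to a cube in `ℤ³`. -/
theorem regularTetrahedron_subset_cube (T : Set (Fin 3 → ℤ))
    (hT : IsRegularTetrahedron T) :
    ∃ C : Set (Fin 3 → ℤ), IsCube C ∧ T ⊆ C := by
  obtain ⟨hcard, s, hs, hdist⟩ := hT
  obtain ⟨a, b, c, d, hab, hac, had, hbc, hbd, hcd, rfl⟩ := Set.ncard_eq_four.mp hcard
  obtain ⟨t, rfl, hframe⟩ := exists_isTetrahedronFrame_of_distSq_eq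
    (hdist a (by simp) b (by simp) hab) (hdist a (by simp) c (by simp) hac)
    (hdist a (by simp) d (by simp) had) (hdist b (by simp) c (by simp) hbc)
    (hdist b (by simp) d (by simp) hbd) (hdist c (by simp) d (by simp) hcd)
  obtain ⟨C, hC, ha, hb, hc, hd⟩ := hframe.exists_isCube (by omega) a
  rw [add_sub_cancel] at hb hc hd
  exact ⟨C, hC, by simp [Set.insert_subset_iff, ha, hb, hc, hd]⟩
end

section
/- If four points of ℤ³ form a regular tetrahedron, then the common squared Euclidean distance between its vertices equals 2ℓ² for some positive integer ℓ; in other words, every regular tetrahedron in ℤ³ has side length ℓ√2 for some positive integer ℓ. -/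
/-!
Let `a` be a vertex and `A` the matrix whose rows are the three edge vectors from `a`. By
polarization the Gram matrix `A * Aᵀ` is `(s / 2) • (1 + J)` with `J` the all-ones matrix, whose
determinant is `s³ / 2`; hence `s³ = 2 (det A)²`. Then `(2 det A)² = s² · 2s`, so `s` divides
`2 det A` and the quotient `n` satisfies `n² = 2s`; thus `n` is even and `s = 2 (n / 2)²`.
-/

open Matrix

theorem distSq_eq_dotProduct (u v : Fin 3 → ℤ) : distSq u v = (u - v) ⬝ᵥ (u - v) := rfl

theorem two_mul_dotProduct_sub_sub {n R : Type*} [Fintype n] [CommRing R] (a b c : n → R) :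
    2 * ((b - a) ⬝ᵥ (c - a)) =
      (b - a) ⬝ᵥ (b - a) + (c - a) ⬝ᵥ (c - a) - (b - c) ⬝ᵥ (b - c) := by
  rw [show b - c = (b - a) - (c - a) by abel]
  simp only [sub_dotProduct, dotProduct_sub, dotProduct_comm c b, dotProduct_comm a b,
    dotProduct_comm a c]
  ring

theorem det_mul_transpose_self {n R : Type*} [Fintype n] [DecidableEq n] [CommRing R]
    (A : Matrix n n R) : (A * Aᵀ).det = A.det ^ 2 := by
  rw [det_mul, det_transpose, sq]

theorem two_mul_sq_det_eq_pow_three {a : Fin 3 → ℤ} {p : Fin 3 → Fin 3 → ℤ} {s : ℤ}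
    (hapex : ∀ i, distSq (p i) a = s) (hbase : ∀ i j, i ≠ j → distSq (p i) (p j) = s) :
    2 * (Matrix.of fun i => p i - a).det ^ 2 = s ^ 3 := by
  set A : Matrix (Fin 3) (Fin 3) ℤ := Matrix.of fun i => p i - a
  have gram : (2 : ℤ) • (A * Aᵀ) = s • Matrix.of fun i j => if i = j then 2 else 1 := by
    ext i j
    change 2 * ((p i - a) ⬝ᵥ (p j - a)) = s * if i = j then 2 else 1
    rcases eq_or_ne i j with rfl | hij
    · rw [if_pos rfl, ← distSq_eq_dotProduct, hapex i, mul_comm]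
    · rw [if_neg hij, mul_one, two_mul_dotProduct_sub_sub]
      simp only [← distSq_eq_dotProduct, hapex, hbase i j hij]
      ring
  have hdet : (Matrix.of fun i j : Fin 3 => if i = j then (2 : ℤ) else 1).det = 4 := by
    simp [det_fin_three]
  have := congrArg Matrix.det gram
  rw [det_smul, det_smul, det_mul_transpose_self, hdet, Fintype.card_fin] at this
  linarith

theorem exists_eq_two_mul_sq_of_pow_three_eq_two_mul_sq {s k : ℤ} (hs : 0 < s)
    (h : s ^ 3 = 2 * k ^ 2) : ∃ m : ℤ, 0 < m ∧ s = 2 * m ^ 2 := by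
  obtain ⟨n, hn⟩ : s ∣ 2 * k :=
    (Int.pow_dvd_pow_iff two_ne_zero).mp ⟨2 * s, by linear_combination -2 * h⟩
  have hn2 : n ^ 2 = 2 * s := by
    refine mul_left_cancel₀ (pow_ne_zero 2 hs.ne') ?_
    rw [← mul_pow, ← hn]
    linear_combination -2 * h
  obtain ⟨m, rfl⟩ : 2 ∣ n := Int.prime_two.dvd_of_dvd_pow ⟨s, hn2⟩
  refine ⟨|m|, abs_pos.mpr ?_, by rw [sq_abs]; linarith⟩
  rintro rfl
  simp at hn2
  linarith

/-- The common squared distance between vertices of a regular tetrahedron in `ℤ³`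
equals `2ℓ²` for some positive integer `ℓ`, i.e. the side length is `ℓ√2`. -/
theorem regularTetrahedron_sideSq_eq_two_mul_sq (T : Set (Fin 3 → ℤ))
    (hT : IsRegularTetrahedron T) :
    ∃ ℓ : ℤ, 0 < ℓ ∧ ∀ u ∈ T, ∀ v ∈ T, u ≠ v → distSq u v = 2 * ℓ ^ 2 := by
  obtain ⟨hcard, s, hs, hdist⟩ := hT
  obtain ⟨a, b, c, d, hab, hac, had, hbc, hbd, hcd, rfl⟩ := Set.ncard_eq_four.mp hcard
  have hdet := two_mul_sq_det_eq_pow_three (a := a) (p := ![b, c, d]) (s := s)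
    (fun i => hdist _ (by fin_cases i <;> simp) _ (by simp)
      (by fin_cases i <;> simp <;> grind))
    (fun i j hij => hdist _ (by fin_cases i <;> simp) _ (by fin_cases j <;> simp)
      (by fin_cases i <;> fin_cases j <;> simp at hij ⊢ <;> grind))
  obtain ⟨m, hm, rfl⟩ := exists_eq_two_mul_sq_of_pow_three_eq_two_mul_sq hs hdet.symm
  exact ⟨m, hm, hdist⟩
end

section
/- For every equilateral triangle in ℤ³ there exist integers a, b, c, d with d ≥ 1 odd, gcd(a,b,c) = 1 and a² + b² + c² = 3d², such that the vector (a,b,c) is orthogonal to the plane of the triangle, i.e., (a,b,c) is orthogonal to the difference of any two vertices of the triangle. -/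
/-- An equilateral triangle in `ℤ³`: three points with equal nonzero pairwise distances. -/
def IsEquilateralTriangle (T : Set (Fin 3 → ℤ)) : Prop :=
  T.ncard = 3 ∧ ∃ s : ℤ, 0 < s ∧ ∀ u ∈ T, ∀ v ∈ T, u ≠ v → distSq u v = s

open Matrix

section EquilateralEdges

variable {R : Type*} [CommRing R] {u v : Fin 3 → R} {s : R}

lemma two_mul_dotProduct_eq_of_equilateral (hu : u ⬝ᵥ u = s) (hv : v ⬝ᵥ v = s)
    (huv : (u - v) ⬝ᵥ (u - v) = s) : 2 * (u ⬝ᵥ v) = s := by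
  simp only [sub_dotProduct, dotProduct_sub, dotProduct_comm v u] at huv
  linear_combination hu + hv - huv

lemma cross_dotProduct_cross_self_of_equilateral (hu : u ⬝ᵥ u = s) (hv : v ⬝ᵥ v = s)
    (huv : (u - v) ⬝ᵥ (u - v) = s) : crossProduct u v ⬝ᵥ crossProduct u v = 3 * (u ⬝ᵥ v) ^ 2 := by
  rw [cross_dot_cross, hu, hv, dotProduct_comm v u,
    ← two_mul_dotProduct_eq_of_equilateral hu hv huv]
  ring

end EquilateralEdges

lemma exists_smul_primitive_of_ne_zero {n : Fin 3 → ℤ} (hn : n ≠ 0) :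
    ∃ g : ℤ, g ≠ 0 ∧ ∃ a b c : ℤ, Int.gcd (Int.gcd a b) c = 1 ∧ n = g • ![a, b, c] := by
  set g := Int.gcd (Int.gcd (n 0) (n 1)) (n 2) with hg
  have hg0 : g ≠ 0 := by
    intro h
    simp only [hg, Int.gcd_eq_zero_iff, Int.natCast_eq_zero] at h
    exact hn (funext fun i => by fin_cases i <;> simp [h])
  obtain ⟨a, ha⟩ : (g : ℤ) ∣ n 0 :=
    (Int.gcd_dvd_left _ _).trans (Int.gcd_dvd_left _ _)
  obtain ⟨b, hb⟩ : (g : ℤ) ∣ n 1 :=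
    (Int.gcd_dvd_left _ _).trans (Int.gcd_dvd_right _ _)
  obtain ⟨c, hc⟩ : (g : ℤ) ∣ n 2 := Int.gcd_dvd_right _ _
  refine ⟨g, by exact_mod_cast hg0, a, b, c, ?_, ?_⟩
  · have h : g * Int.gcd (Int.gcd a b) c = g * 1 := by
      conv_rhs => rw [mul_one, hg, ha, hb, hc, Int.gcd_mul_left, Int.natAbs_natCast, Nat.cast_mul,
        Int.gcd_mul_left, Int.natAbs_natCast]
    exact Nat.eq_of_mul_eq_mul_left (Nat.pos_of_ne_zero hg0) h
  · funext i
    fin_cases i <;> simp [ha, hb, hc]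

lemma exists_eq_three_mul_sq_of_sq_mul_eq {g N t : ℤ} (hg : g ≠ 0)
    (h : g ^ 2 * N = 3 * t ^ 2) : ∃ d, N = 3 * d ^ 2 := by
  obtain ⟨e, he⟩ : g ∣ 3 * t := by
    rw [← Int.pow_dvd_pow_iff two_ne_zero]
    exact ⟨3 * N, by linear_combination -3 * h⟩
  have hNe : 3 * N = e ^ 2 := by
    refine mul_left_cancel₀ (pow_ne_zero 2 hg) ?_
    linear_combination 3 * h + (3 * t + g * e) * he
  obtain ⟨d, rfl⟩ : 3 ∣ e := Int.prime_three.dvd_of_dvd_pow (n := 2) ⟨N, hNe.symm⟩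
  exact ⟨d, mul_left_cancel₀ three_ne_zero (by linear_combination hNe)⟩

lemma two_dvd_of_four_dvd_sq_add_sq_add_sq {a b c : ℤ} (h : 4 ∣ a ^ 2 + b ^ 2 + c ^ 2) :
    2 ∣ a ∧ 2 ∣ b ∧ 2 ∣ c := by
  have hmod : ∀ x y z : ZMod 4, x ^ 2 + y ^ 2 + z ^ 2 = 0 →
      2 * x = 0 ∧ 2 * y = 0 ∧ 2 * z = 0 := by decide
  have two_dvd {x : ℤ} (hx : ((2 * x : ℤ) : ZMod 4) = 0) : 2 ∣ x := by
    have := (ZMod.intCast_zmod_eq_zero_iff_dvd _ 4).mp hx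
    omega
  obtain ⟨ha, hb, hc⟩ :=
    hmod a b c (by exact_mod_cast (ZMod.intCast_zmod_eq_zero_iff_dvd _ 4).mpr h)
  exact ⟨two_dvd (by exact_mod_cast ha), two_dvd (by exact_mod_cast hb),
    two_dvd (by exact_mod_cast hc)⟩

lemma odd_of_sq_add_sq_add_sq_eq_three_mul_sq {a b c d : ℤ}
    (hprim : Int.gcd (Int.gcd a b) c = 1) (h : a ^ 2 + b ^ 2 + c ^ 2 = 3 * d ^ 2) : Odd d := by
  rw [← Int.not_even_iff_odd]
  rintro ⟨m, rfl⟩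
  obtain ⟨ha, hb, hc⟩ := two_dvd_of_four_dvd_sq_add_sq_add_sq ⟨3 * m ^ 2, by rw [h]; ring⟩
  have := Int.dvd_coe_gcd (Int.dvd_coe_gcd ha hb) hc
  rw [hprim] at this
  norm_num at this

lemma exists_primitive_normal_of_equilateral {u v : Fin 3 → ℤ} {s : ℤ} (hs : 0 < s)
    (hu : u ⬝ᵥ u = s) (hv : v ⬝ᵥ v = s) (huv : (u - v) ⬝ᵥ (u - v) = s) :
    ∃ a b c d : ℤ, 1 ≤ d ∧ Odd d ∧ Int.gcd (Int.gcd a b) c = 1 ∧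
      a ^ 2 + b ^ 2 + c ^ 2 = 3 * d ^ 2 ∧ ![a, b, c] ⬝ᵥ u = 0 ∧ ![a, b, c] ⬝ᵥ v = 0 := by
  have hnorm := cross_dotProduct_cross_self_of_equilateral hu hv huv
  have ht : u ⬝ᵥ v ≠ 0 := by
    have := two_mul_dotProduct_eq_of_equilateral hu hv huv
    omega
  have hn : crossProduct u v ≠ 0 := by
    intro h
    rw [h, zero_dotProduct] at hnorm
    exact ht (by simpa using hnorm.symm)
  obtain ⟨g, hg, a, b, c, hprim, hgn⟩ := exists_smul_primitive_of_ne_zero hn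
  have orth {w : Fin 3 → ℤ} (hw : w ⬝ᵥ crossProduct u v = 0) : ![a, b, c] ⬝ᵥ w = 0 := by
    rw [hgn, dotProduct_comm, smul_dotProduct, smul_eq_mul] at hw
    exact (mul_eq_zero.mp hw).resolve_left hg
  obtain ⟨d, hd⟩ := exists_eq_three_mul_sq_of_sq_mul_eq hg (N := a ^ 2 + b ^ 2 + c ^ 2) <| by
    rw [← hnorm, hgn, smul_dotProduct, dotProduct_smul]
    simp only [cons_dotProduct_cons, dotProduct_of_isEmpty, smul_eq_mul]
    ring
  have hodd := odd_of_sq_add_sq_add_sq_eq_three_mul_sq hprim hd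
  refine ⟨a, b, c, |d|, ?_, odd_abs.mpr hodd, hprim, by rw [sq_abs, hd],
    orth (dot_self_cross u v), orth (dot_cross_self u v)⟩
  exact Int.one_le_abs fun h => by simp [h] at hodd

/-- For every equilateral triangle in `ℤ³` there are integers `a, b, c, d` with `d ≥ 1`
odd, `gcd(a,b,c) = 1` and `a² + b² + c² = 3d²` such that `(a,b,c)` is orthogonal to the
plane of the triangle. -/
theorem equilateralTriangle_normal (T : Set (Fin 3 → ℤ))
    (hT : IsEquilateralTriangle T) :
    ∃ a b c d : ℤ, 1 ≤ d ∧ Odd d ∧ Int.gcd (Int.gcd a b) c = 1 ∧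
      a ^ 2 + b ^ 2 + c ^ 2 = 3 * d ^ 2 ∧
      ∀ u ∈ T, ∀ v ∈ T, dot3 ![a, b, c] (u - v) = 0 := by
  obtain ⟨hcard, s, hs, hdist⟩ := hT
  obtain ⟨P, Q, R, hPQ, hPR, hQR, rfl⟩ := Set.ncard_eq_three.mp hcard
  have hu : (Q - P) ⬝ᵥ (Q - P) = s := hdist Q (by simp) P (by simp) hPQ.symm
  have hv : (R - P) ⬝ᵥ (R - P) = s := hdist R (by simp) P (by simp) hPR.symm
  have huv : (Q - P - (R - P)) ⬝ᵥ (Q - P - (R - P)) = s := by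
    rw [sub_sub_sub_cancel_right]
    exact hdist Q (by simp) R (by simp) hQR
  obtain ⟨a, b, c, d, hd, hodd, hprim, hsum, hQ, hR⟩ :=
    exists_primitive_normal_of_equilateral hs hu hv huv
  refine ⟨a, b, c, d, hd, hodd, hprim, hsum, ?_⟩
  have hP : ∀ x ∈ ({P, Q, R} : Set (Fin 3 → ℤ)), ![a, b, c] ⬝ᵥ (x - P) = 0 := by
    rintro x (rfl | rfl | rfl) <;> simp [hQ, hR]
  intro x hx y hy
  change ![a, b, c] ⬝ᵥ (x - y) = 0
  rw [← sub_sub_sub_cancel_right x y P, dotProduct_sub, hP x hx, hP y hy, sub_zero]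
end

section
/- Let a, b, c, d, r, s be integers with a² + b² + c² = 3d², q := a² + b² ≠ 0 and s² + 3r² = 2q. Define the vectors ζ, η ∈ ℚ³ by ζ = (−(rac + dbs)/q, (das − bcr)/q, r) and η = (−(db(s−3r) + ac(r+s))/(2q), (da(s−3r) − bc(r+s))/(2q), (r+s)/2). Then ζ·ζ = 2d², η·η = 2d², ζ·η = d², and a·ζ₁ + b·ζ₂ + c·ζ₃ = 0 and a·η₁ + b·η₂ + c·η₃ = 0. -/
/-- Dot product of rational vectors in `ℚ³`. -/
def dot3Q (u v : Fin 3 → ℚ) : ℚ := ∑ i, u i * v i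

/-!
With `n = (a, b, c)` and `e₃ = (0, 0, 1)`, the vectors `w = e₃ × n = (-b, a, 0)` and
`u = n × w = (-ac, -bc, q)` form an orthogonal frame of the plane `n⊥`, with `|w|² = q` and
`|u|² = |n|² q = 3d²q`. In this frame `ζ` and `η` have coordinates `(r, ds)/q` and
`(r + s, d(s - 3r))/(2q)`, and each of the three inner products is a multiple of
`d²(s² + 3r²)/q = 2d²`.
-/

open Matrix

section PerpVec

variable {R : Type*} [CommRing R]

theorem dotProduct_smul_add_smul_of_dotProduct_eq_zero {ι : Type*} [Fintype ι] {u w : ι → R}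
    (h : u ⬝ᵥ w = 0) (x y x' y' : R) :
    (x • u + y • w) ⬝ᵥ (x' • u + y' • w) = x * x' * (u ⬝ᵥ u) + y * y' * (w ⬝ᵥ w) := by
  simp only [add_dotProduct, dotProduct_add, smul_dotProduct, dotProduct_smul, smul_eq_mul,
    dotProduct_comm w u, h]
  ring

def perpVec (n : Fin 3 → R) (x y : R) : Fin 3 → R :=
  x • n ⨯₃ (![0, 0, 1] ⨯₃ n) + y • ![0, 0, 1] ⨯₃ n

theorem dotProduct_perpVec (n : Fin 3 → R) (x y : R) : n ⬝ᵥ perpVec n x y = 0 := by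
  simp [perpVec, dotProduct_add, dotProduct_smul]

theorem perpVec_dotProduct_perpVec (n : Fin 3 → R) (x y x' y' : R) :
    perpVec n x y ⬝ᵥ perpVec n x' y' = (x * x' * (n ⬝ᵥ n) + y * y') * (n 0 ^ 2 + n 1 ^ 2) := by
  set w := ![0, 0, 1] ⨯₃ n
  have hw : w ⬝ᵥ w = n 0 ^ 2 + n 1 ^ 2 := by
    rw [cross_dot_cross]; simp [vec3_dotProduct, vecHead, vecTail]; ring
  have hu : n ⨯₃ w ⬝ᵥ n ⨯₃ w = (n ⬝ᵥ n) * (n 0 ^ 2 + n 1 ^ 2) := by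
    rw [cross_dot_cross, dot_cross_self, hw, zero_mul, sub_zero]
  have huw : n ⨯₃ w ⬝ᵥ w = 0 := by rw [dotProduct_comm, dot_cross_self]
  rw [perpVec, perpVec, dotProduct_smul_add_smul_of_dotProduct_eq_zero huw, hu, hw]
  ring

theorem perpVec_vec3 (a b c x y : R) :
    perpVec ![a, b, c] x y = ![-(x * a * c) - y * b, -(x * b * c) + y * a, x * (a ^ 2 + b ^ 2)] := by
  ext i
  fin_cases i <;> simp [perpVec, cross_apply] <;> ring

end PerpVec

/-- The vectors `ζ, η` of the parametrization satisfy `ζ·ζ = η·η = 2d²`, `ζ·η = d²`,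
and are orthogonal to `(a,b,c)`, whenever `a² + b² + c² = 3d²`, `q = a² + b² ≠ 0`
and `s² + 3r² = 2q`. -/
theorem zeta_eta_properties (a b c d r s q : ℤ)
    (habc : a ^ 2 + b ^ 2 + c ^ 2 = 3 * d ^ 2)
    (hq : q = a ^ 2 + b ^ 2) (hq0 : q ≠ 0) (hrs : s ^ 2 + 3 * r ^ 2 = 2 * q)
    (ζ η : Fin 3 → ℚ)
    (hζ : ζ = ![-(((r : ℚ) * a * c + (d : ℚ) * b * s)) / (q : ℚ),
                ((d : ℚ) * a * s - (b : ℚ) * c * r) / (q : ℚ),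
                (r : ℚ)])
    (hη : η = ![-(((d : ℚ) * b * ((s : ℚ) - 3 * r) + (a : ℚ) * c * ((r : ℚ) + s))) / (2 * (q : ℚ)),
                ((d : ℚ) * a * ((s : ℚ) - 3 * r) - (b : ℚ) * c * ((r : ℚ) + s)) / (2 * (q : ℚ)),
                ((r : ℚ) + s) / 2]) :
    dot3Q ζ ζ = 2 * (d : ℚ) ^ 2 ∧ dot3Q η η = 2 * (d : ℚ) ^ 2 ∧
      dot3Q ζ η = (d : ℚ) ^ 2 ∧
      (a : ℚ) * ζ 0 + (b : ℚ) * ζ 1 + (c : ℚ) * ζ 2 = 0 ∧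
      (a : ℚ) * η 0 + (b : ℚ) * η 1 + (c : ℚ) * η 2 = 0 := by
  have hq' : (q : ℚ) = a ^ 2 + b ^ 2 := by exact_mod_cast hq
  have hq0' : (q : ℚ) ≠ 0 := by exact_mod_cast hq0
  have hrs' : (s : ℚ) ^ 2 + 3 * r ^ 2 = 2 * q := by exact_mod_cast hrs
  set n : Fin 3 → ℚ := ![a, b, c]
  have hnn : n ⬝ᵥ n = 3 * d ^ 2 := by
    simp [n, ← sq, ← add_assoc]; exact_mod_cast habc
  have hζ' : ζ = perpVec n (r / q) (d * s / q) := by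
    rw [hζ, perpVec_vec3, ← hq']; ext i; fin_cases i <;> simp <;> field_simp <;> ring
  have hη' : η = perpVec n ((r + s) / (2 * q)) (d * (s - 3 * r) / (2 * q)) := by
    rw [hη, perpVec_vec3, ← hq']; ext i; fin_cases i <;> simp <;> field_simp <;> ring
  have hdot (x y x' y' : ℚ) :
      dot3Q (perpVec n x y) (perpVec n x' y') = (x * x' * (3 * d ^ 2) + y * y') * q := by
    rw [dot3Q, ← dotProduct, perpVec_dotProduct_perpVec, hnn, hq']; rfl
  refine ⟨?_, ?_, ?_, ?_, ?_⟩
  · rw [hζ', hdot]; field_simp; linear_combination d ^ 2 * hrs'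
  · rw [hη', hdot]; field_simp; linear_combination 4 * d ^ 2 * hrs'
  · rw [hζ', hη', hdot]; field_simp; linear_combination d ^ 2 * hrs'
  · rw [← dotProduct_perpVec n _ _, ← hζ', vec3_dotProduct]; rfl
  · rw [← dotProduct_perpVec n _ _, ← hη', vec3_dotProduct]; rfl
end

section
/- Let d be a nonzero real number and let ζ, η be vectors in ℝ³ satisfying ζ·ζ = η·η = 2d² and ζ·η = d². For any integers m, n not both zero, setting P = mζ − nη and Q = nζ − (n−m)η, the triangle with vertices O = (0,0,0), P, Q is equilateral with squared side length 2d²(m² − mn + n²); that is, |P|² = |Q|² = |P − Q|² = 2d²(m² − mn + n²). -/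
def dot3R (u v : Fin 3 → ℝ) : ℝ := ∑ i, u i * v i

theorem dot3R_eq_dotProduct (u v : Fin 3 → ℝ) : dot3R u v = u ⬝ᵥ v := rfl

/-- `ζ, η` span a hexagonal lattice: the quadratic form `a² - ab + b²` of the Eisenstein integers
scaled by `2c`. -/
theorem dotProduct_self_smul_sub_smul_of_hexagonal {ι R : Type*} [Fintype ι] [CommRing R]
    {ζ η : ι → R} {c : R} (hζζ : ζ ⬝ᵥ ζ = 2 * c) (hηη : η ⬝ᵥ η = 2 * c) (hζη : ζ ⬝ᵥ η = c)
    (a b : R) : (a • ζ - b • η) ⬝ᵥ (a • ζ - b • η) = 2 * c * (a ^ 2 - a * b + b ^ 2) := by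
  simp only [sub_dotProduct, dotProduct_sub, smul_dotProduct, dotProduct_smul, smul_eq_mul,
    dotProduct_comm η ζ]
  linear_combination a ^ 2 * hζζ + b ^ 2 * hηη - 2 * a * b * hζη

theorem equilateral_from_zeta_eta_general (d : ℝ) (ζ η : Fin 3 → ℝ)
    (hζζ : dot3R ζ ζ = 2 * d ^ 2) (hηη : dot3R η η = 2 * d ^ 2)
    (hζη : dot3R ζ η = d ^ 2) (m n : ℤ)
    (P Q : Fin 3 → ℝ)
    (hP : P = (m : ℝ) • ζ - (n : ℝ) • η)
    (hQ : Q = (n : ℝ) • ζ - ((n : ℝ) - (m : ℝ)) • η) :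
    dot3R P P = 2 * d ^ 2 * ((m : ℝ) ^ 2 - (m : ℝ) * n + (n : ℝ) ^ 2) ∧
    dot3R Q Q = 2 * d ^ 2 * ((m : ℝ) ^ 2 - (m : ℝ) * n + (n : ℝ) ^ 2) ∧
    dot3R (P - Q) (P - Q) = 2 * d ^ 2 * ((m : ℝ) ^ 2 - (m : ℝ) * n + (n : ℝ) ^ 2) := by
  simp only [dot3R_eq_dotProduct] at *
  have norm_eq := dotProduct_self_smul_sub_smul_of_hexagonal hζζ hηη hζη
  have hPQ : P - Q = ((m : ℝ) - n) • ζ - (m : ℝ) • η := by rw [hP, hQ]; module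
  refine ⟨?_, ?_, ?_⟩
  · rw [hP, norm_eq]
  · rw [hQ, norm_eq]; ring
  · rw [hPQ, norm_eq]; ring

/-- If `ζ·ζ = η·η = 2d²` and `ζ·η = d²` with `d ≠ 0`, then for integers `m, n` not both
zero, the points `O = 0`, `P = mζ − nη`, `Q = nζ − (n−m)η` form an equilateral triangle
with squared side length `2d²(m² − mn + n²)`. -/
theorem equilateral_from_zeta_eta (d : ℝ) (hd : d ≠ 0) (ζ η : Fin 3 → ℝ)
    (hζζ : dot3R ζ ζ = 2 * d ^ 2) (hηη : dot3R η η = 2 * d ^ 2)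
    (hζη : dot3R ζ η = d ^ 2) (m n : ℤ) (hmn : ¬(m = 0 ∧ n = 0))
    (P Q : Fin 3 → ℝ)
    (hP : P = (m : ℝ) • ζ - (n : ℝ) • η)
    (hQ : Q = (n : ℝ) • ζ - ((n : ℝ) - (m : ℝ)) • η) :
    dot3R P P = 2 * d ^ 2 * ((m : ℝ) ^ 2 - (m : ℝ) * n + (n : ℝ) ^ 2) ∧
    dot3R Q Q = 2 * d ^ 2 * ((m : ℝ) ^ 2 - (m : ℝ) * n + (n : ℝ) ^ 2) ∧
    dot3R (P - Q) (P - Q) = 2 * d ^ 2 * ((m : ℝ) ^ 2 - (m : ℝ) * n + (n : ℝ) ^ 2) :=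
  equilateral_from_zeta_eta_general d ζ η hζζ hηη hζη m n P Q hP hQ
end

section
/- Let q be a positive integer and let r, s be integers with r ≡ s (mod 2) and s² + 3r² = 2q. If m and n are real numbers such that m·r − n·(r+s)/2 and m·(r+s)/2 + n·(r−s)/2 are both integers, then (q/2)·m and (q/2)·n are integers (in particular m and n are rational with denominator dividing q/2). -/
/-!
With `A = (r+s)/2` and `B = (r-s)/2` we have `r = A + B`, `s = A - B`, so
`s² + 3r² = 4(A² + AB + B²)` and `q/2 = A² + AB + B²`. This is the determinant of the
integer system `r·m − A·n = u`, `A·m + B·n = v`, and multiplying by the adjugate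
expresses `(q/2)·m` and `(q/2)·n` as integer combinations of `u` and `v`.
-/

theorem exists_det_mul_eq_intCast {R : Type*} [CommRing R] {a b c d : ℤ} {x y : R}
    (h₁ : ∃ u : ℤ, a * x + b * y = u) (h₂ : ∃ v : ℤ, c * x + d * y = v) :
    (∃ k : ℤ, ((a * d - b * c : ℤ) : R) * x = k) ∧
      (∃ k : ℤ, ((a * d - b * c : ℤ) : R) * y = k) := by
  obtain ⟨u, hu⟩ := h₁
  obtain ⟨v, hv⟩ := h₂
  exact ⟨⟨d * u - b * v, by push_cast; linear_combination (d : R) * hu - (b : R) * hv⟩,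
    ⟨a * v - c * u, by push_cast; linear_combination (a : R) * hv - (c : R) * hu⟩⟩

theorem denominators_divide_general (q r s : ℤ) (hpar : r ≡ s [ZMOD 2])
    (hrs : s ^ 2 + 3 * r ^ 2 = 2 * q) (m n : ℝ)
    (h₁ : ∃ u : ℤ, m * (r : ℝ) - n * (((r + s) / 2 : ℤ) : ℝ) = (u : ℝ))
    (h₂ : ∃ v : ℤ, m * (((r + s) / 2 : ℤ) : ℝ) + n * (((r - s) / 2 : ℤ) : ℝ) = (v : ℝ)) :
    (∃ km : ℤ, (q : ℝ) / 2 * m = (km : ℝ)) ∧ (∃ kn : ℤ, (q : ℝ) / 2 * n = (kn : ℝ)) := by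
  set A := (r + s) / 2
  set B := (r - s) / 2
  have hr : r = A + B := by unfold Int.ModEq at hpar; omega
  have hs : s = A - B := by unfold Int.ModEq at hpar; omega
  have hq : q = 2 * (A ^ 2 + A * B + B ^ 2) := by rw [hr, hs] at hrs; linarith
  have hdet : ((r * B - -A * A : ℤ) : ℝ) = q / 2 := by
    rw [hr, hq]; push_cast; ring
  have h := exists_det_mul_eq_intCast (a := r) (b := -A) (c := A) (d := B) (x := m) (y := n)
    (h₁.imp fun u hu => by push_cast; linear_combination hu)
    (h₂.imp fun v hv => by linear_combination hv)
  rwa [hdet] at h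

/-- If `s² + 3r² = 2q` with `r ≡ s (mod 2)` and `q > 0`, and the real numbers `m, n`
are such that `m·r − n·(r+s)/2` and `m·(r+s)/2 + n·(r−s)/2` are integers, then
`(q/2)·m` and `(q/2)·n` are integers. -/
theorem denominators_divide (q r s : ℤ) (hq : 0 < q) (hpar : r ≡ s [ZMOD 2])
    (hrs : s ^ 2 + 3 * r ^ 2 = 2 * q) (m n : ℝ)
    (h₁ : ∃ u : ℤ, m * (r : ℝ) - n * (((r + s) / 2 : ℤ) : ℝ) = (u : ℝ))
    (h₂ : ∃ v : ℤ, m * (((r + s) / 2 : ℤ) : ℝ) + n * (((r - s) / 2 : ℤ) : ℝ) = (v : ℝ)) :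
    (∃ km : ℤ, (q : ℝ) / 2 * m = (km : ℝ)) ∧ (∃ kn : ℤ, (q : ℝ) / 2 * n = (kn : ℝ)) :=
  denominators_divide_general q r s hpar hrs m n h₁ h₂
end

section
/- If a, b, c are odd integers with gcd(a,b,c) = 1, then gcd((a² + b²)/2, (b² + c²)/2, (a² + c²)/2) = 1. -/
/-! If `2x = a² + b²`, `2y = b² + c²`, `2z = a² + c²`, then `a² = x + z - y`, `b² = x + y - z`
and `c² = y + z - x`, so `gcd(x, y, z)` divides `gcd(a², b², c²) = gcd(a, b, c)² = 1`. -/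

theorem Int.gcd_gcd_pow (a b c : ℤ) (n : ℕ) :
    Int.gcd (Int.gcd (a ^ n) (b ^ n)) (c ^ n) = Int.gcd (Int.gcd a b) c ^ n := by
  rw [Int.pow_gcd_pow, Nat.cast_pow, Int.pow_gcd_pow]

theorem Int.two_mul_half_sq_add_sq {a b : ℤ} (ha : Odd a) (hb : Odd b) :
    2 * ((a ^ 2 + b ^ 2) / 2) = a ^ 2 + b ^ 2 :=
  Int.two_mul_ediv_two_of_even (ha.pow.add_odd hb.pow)

theorem Int.gcd_gcd_dvd_add_sub (x y z : ℤ) :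
    (Int.gcd (Int.gcd x y) z : ℤ) ∣ x + z - y :=
  have hx : (Int.gcd (Int.gcd x y) z : ℤ) ∣ x :=
    (Int.gcd_dvd_left _ _).trans (Int.gcd_dvd_left _ _)
  have hy : (Int.gcd (Int.gcd x y) z : ℤ) ∣ y :=
    (Int.gcd_dvd_left _ _).trans (Int.gcd_dvd_right _ _)
  (hx.add (Int.gcd_dvd_right _ _)).sub hy

/-- If `a, b, c` are odd integers with `gcd(a,b,c) = 1`, then
`gcd((a² + b²)/2, (b² + c²)/2, (a² + c²)/2) = 1`. -/
theorem gcd_half_sums_eq_one (a b c : ℤ) (ha : Odd a) (hb : Odd b) (hc : Odd c)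
    (hgcd : Int.gcd (Int.gcd a b) c = 1) :
    Int.gcd (Int.gcd ((a ^ 2 + b ^ 2) / 2) ((b ^ 2 + c ^ 2) / 2)) ((a ^ 2 + c ^ 2) / 2) = 1 := by
  set x := (a ^ 2 + b ^ 2) / 2
  set y := (b ^ 2 + c ^ 2) / 2
  set z := (a ^ 2 + c ^ 2) / 2
  have hx : 2 * x = a ^ 2 + b ^ 2 := Int.two_mul_half_sq_add_sq ha hb
  have hy : 2 * y = b ^ 2 + c ^ 2 := Int.two_mul_half_sq_add_sq hb hc
  have hz : 2 * z = a ^ 2 + c ^ 2 := Int.two_mul_half_sq_add_sq ha hc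
  have ha2 : (Int.gcd (Int.gcd x y) z : ℤ) ∣ a ^ 2 := by
    convert Int.gcd_gcd_dvd_add_sub x y z using 1; linarith
  have hb2 : (Int.gcd (Int.gcd x y) z : ℤ) ∣ b ^ 2 := by
    convert Int.gcd_gcd_dvd_add_sub x z y using 1
    · rw [Int.gcd_assoc, Int.gcd_comm y, ← Int.gcd_assoc]
    · linarith
  have hc2 : (Int.gcd (Int.gcd x y) z : ℤ) ∣ c ^ 2 := by
    convert Int.gcd_gcd_dvd_add_sub y x z using 1
    · rw [Int.gcd_comm x]
    · linarith
  have hdvd := Int.dvd_coe_gcd (Int.dvd_coe_gcd ha2 hb2) hc2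
  rw [Int.gcd_gcd_pow, hgcd, one_pow, Nat.cast_one] at hdvd
  exact Nat.dvd_one.mp (Int.natCast_dvd_natCast.mp hdvd)
end

section
/- Special case b = c of the parametrization: let a, b, d be integers with d odd, a odd, and a² + 2b² = 3d². Define ζ = (0, d, −d) and η = (−b, (a+d)/2, (a−d)/2), vectors with integer entries. Then ζ·ζ = 2d², η·η = 2d², ζ·η = d², and both ζ and η are orthogonal to the vector (a, b, b). -/
lemma dot3_vec3 (x₀ x₁ x₂ y₀ y₁ y₂ : ℤ) :
    dot3 ![x₀, x₁, x₂] ![y₀, y₁, y₂] = x₀ * y₀ + x₁ * y₁ + x₂ * y₂ := by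
  simp [dot3, Fin.sum_univ_three, add_assoc]

lemma two_dvd_add_of_sq_add_two_mul_sq_eq_three_mul_sq {a b d : ℤ}
    (h : a ^ 2 + 2 * b ^ 2 = 3 * d ^ 2) : 2 ∣ a + d := by
  have hsq : (a + d) ^ 2 = 2 * (2 * d ^ 2 - b ^ 2 + a * d) := by linear_combination h
  exact Int.prime_two.dvd_of_dvd_pow ⟨_, hsq⟩

theorem special_case_b_eq_c_general (a b d : ℤ)
    (habd : a ^ 2 + 2 * b ^ 2 = 3 * d ^ 2)
    (ζ η : Fin 3 → ℤ)
    (hζ : ζ = ![0, d, -d])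
    (hη : η = ![-b, (a + d) / 2, (a - d) / 2]) :
    dot3 ζ ζ = 2 * d ^ 2 ∧ dot3 η η = 2 * d ^ 2 ∧ dot3 ζ η = d ^ 2 ∧
      dot3 ζ ![a, b, b] = 0 ∧ dot3 η ![a, b, b] = 0 := by
  have hdvd := two_dvd_add_of_sq_add_two_mul_sq_eq_three_mul_sq habd
  have ha : a = (a + d) / 2 + (a - d) / 2 := by omega
  have hd : d = (a + d) / 2 - (a - d) / 2 := by omega
  subst hζ hη
  simp only [dot3_vec3]
  -- In the coordinates `p = (a + d) / 2`, `q = (a - d) / 2` every claim is a polynomial identity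
  -- modulo the norm equation, which reads `b² = p² - 4pq + q²`.
  generalize (a + d) / 2 = p at *
  generalize (a - d) / 2 = q at *
  subst ha hd
  have hb : b ^ 2 = p ^ 2 - 4 * p * q + q ^ 2 := by linarith
  exact ⟨by ring, by linear_combination hb, by ring, by ring, by ring⟩

/-- Special case `b = c`: for `a² + 2b² = 3d²` with `a, d` odd, the integer vectors
`ζ = (0, d, −d)` and `η = (−b, (a+d)/2, (a−d)/2)` satisfy `ζ·ζ = η·η = 2d²`,
`ζ·η = d²`, and both are orthogonal to `(a, b, b)`. -/
theorem special_case_b_eq_c (a b d : ℤ) (hd : Odd d) (ha : Odd a)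
    (habd : a ^ 2 + 2 * b ^ 2 = 3 * d ^ 2)
    (ζ η : Fin 3 → ℤ)
    (hζ : ζ = ![0, d, -d])
    (hη : η = ![-b, (a + d) / 2, (a - d) / 2]) :
    dot3 ζ ζ = 2 * d ^ 2 ∧ dot3 η η = 2 * d ^ 2 ∧ dot3 ζ η = d ^ 2 ∧
      dot3 ζ ![a, b, b] = 0 ∧ dot3 η ![a, b, b] = 0 :=
  special_case_b_eq_c_general a b d habd ζ η hζ hη
end

section
/- For every odd integer d ≥ 1, the Diophantine equation a² + b² + c² = 3d² has a solution in integers with 0 < a ≤ b ≤ c and gcd(a,b,c) = 1. -/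
/-!
Write `p = N(w)` for an integral quaternion `w` (Lagrange). Conjugation `v ↦ w v w̄` preserves
pure quaternions, multiplies norms by `p²`, and satisfies `w̄ (w v w̄) w = p² v`; so for a primitive
`v` the only prime that can divide all coordinates of `w v w̄` is `p`. If `p` divided them for every
primitive representation of `m` (a set closed under sign changes and cyclic shifts of coordinates),
conjugation by `w` would vanish mod `p`, which forces `p ∣ w` and `p² ∣ N(w) = p`. Hence primitive
representations pass from `m` to `p² m` for every odd prime `p`, and by induction from
`3 = 1² + 1² + 1²` to `3d²`. No coordinate of such a representation vanishes, since
`3d² ≡ 3 (mod 4)` is not a sum of two squares; taking absolute values and sorting finishes the proof.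
-/

open Quaternion

namespace Quaternion

variable {R S : Type*} [CommRing R] [CommRing S]

-- A bare `⟨a, b, c, d⟩` has type `QuaternionAlgebra R (-1) 0 (-1)`, where the `ℍ[R]` simp set
-- does not fire.
def mk (a b c d : R) : ℍ[R] := ⟨a, b, c, d⟩

@[simp] lemma re_mk (a b c d : R) : (mk a b c d).re = a := rfl
@[simp] lemma imI_mk (a b c d : R) : (mk a b c d).imI = b := rfl
@[simp] lemma imJ_mk (a b c d : R) : (mk a b c d).imJ = c := rfl
@[simp] lemma imK_mk (a b c d : R) : (mk a b c d).imK = d := rfl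

def map (f : R →+* S) : ℍ[R] →+* ℍ[S] where
  toFun q := mk (f q.re) (f q.imI) (f q.imJ) (f q.imK)
  map_one' := by ext <;> simp
  map_mul' a b := by ext <;> simp
  map_zero' := by ext <;> simp
  map_add' a b := by ext <;> simp

@[simp] lemma map_mk (f : R →+* S) (a b c d : R) :
    map f (mk a b c d) = mk (f a) (f b) (f c) (f d) := rfl
@[simp] lemma re_map (f : R →+* S) (q : ℍ[R]) : (map f q).re = f q.re := rfl
@[simp] lemma imI_map (f : R →+* S) (q : ℍ[R]) : (map f q).imI = f q.imI := rfl
@[simp] lemma imJ_map (f : R →+* S) (q : ℍ[R]) : (map f q).imJ = f q.imJ := rfl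
@[simp] lemma imK_map (f : R →+* S) (q : ℍ[R]) : (map f q).imK = f q.imK := rfl

@[simp]
lemma map_star (f : R →+* S) (q : ℍ[R]) : map f (star q) = star (map f q) := by
  ext <;> simp

@[simp]
lemma normSq_map (f : R →+* S) (q : ℍ[R]) : normSq (map f q) = f (normSq q) := by
  simp [normSq_def']

lemma normSq_mk (a b c d : R) : normSq (mk a b c d) = a ^ 2 + b ^ 2 + c ^ 2 + d ^ 2 := by
  simp [normSq_def']

lemma re_mul_mul_star (w v : ℍ[R]) : (w * v * star w).re = normSq w * v.re := by
  simp [normSq_def']; ring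

lemma normSq_mul_mul_star (w v : ℍ[R]) :
    normSq (w * v * star w) = normSq w ^ 2 * normSq v := by
  simp only [map_mul, normSq_star]; ring

lemma eq_zero_of_mul_basis_mul_star_eq_zero [NoZeroDivisors R] (h2 : (2 : R) ≠ 0) {w : ℍ[R]}
    (hw : normSq w = 0) (hI : w * mk 0 1 0 0 * star w = 0) (hJ : w * mk 0 0 1 0 * star w = 0)
    (hK : w * mk 0 0 0 1 * star w = 0) : w = 0 := by
  have dI := congrArg (·.imI) hI
  have dJ := congrArg (·.imJ) hJ
  have dK := congrArg (·.imK) hK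
  simp only [imI_mul, imJ_mul, imK_mul, re_mul, re_mk, imI_mk, imJ_mk, imK_mk, re_star, imI_star,
    imJ_star, imK_star, imI_zero, imJ_zero, imK_zero] at dI dJ dK
  -- The diagonal entries of conjugation by `w = r + si + tj + uk` satisfy
  -- `dI + dJ + dK + N = 4r²` and `dI + N = 2(r² + s²)`, and similarly for `t` and `u`.
  rw [normSq_def'] at hw
  have sq_eq_zero : ∀ {k x : R}, k ≠ 0 → k * x ^ 2 = 0 → x = 0 := fun hk h =>
    pow_eq_zero_iff two_ne_zero |>.mp ((mul_eq_zero.mp h).resolve_left hk)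
  have hre : w.re = 0 :=
    sq_eq_zero (mul_ne_zero h2 h2) (by linear_combination dI + dJ + dK + hw)
  ext
  · exact hre
  · exact sq_eq_zero h2 (by linear_combination dI + hw - 2 * w.re * hre)
  · exact sq_eq_zero h2 (by linear_combination dJ + hw - 2 * w.re * hre)
  · exact sq_eq_zero h2 (by linear_combination dK + hw - 2 * w.re * hre)

section Field

variable {F : Type*} [Field F]

lemma eq_zero_or_normSq_eq_zero_of_mul_mul_star_eq_zero {w v : ℍ[F]}
    (h : w * v * star w = 0) : v = 0 ∨ normSq w = 0 := by
  have key : normSq w ^ 2 • v = star w * (w * v * star w) * w := by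
    simp only [← mul_assoc, star_mul_self]
    rw [mul_assoc, star_mul_self, ← coe_commutes, ← mul_assoc, ← coe_mul, coe_mul_eq_smul, sq]
  rw [h, mul_zero, zero_mul, smul_eq_zero, pow_eq_zero_iff two_ne_zero] at key
  exact key.symm

lemma smul_mul_mul_eq_zero_of_sign_changes (h2 : (2 : F) ≠ 0) {x y : ℍ[F]} {a b c : F}
    (h₁ : x * mk 0 a b c * y = 0) (h₂ : x * mk 0 a (-b) (-c) * y = 0)
    (h₃ : x * mk 0 a (-b) c * y = 0) :
    a • (x * mk 0 1 0 0 * y) = 0 ∧ b • (x * mk 0 0 1 0 * y) = 0 ∧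
      c • (x * mk 0 0 0 1 * y) = 0 := by
  have half : ∀ (k : F) (q : ℍ[F]), (2 * k) • q = 0 → k • q = 0 := fun k q h =>
    (smul_eq_zero.mp (mul_smul (2 : F) k q ▸ h)).resolve_left h2
  refine ⟨half _ _ ?_, half _ _ ?_, half _ _ ?_⟩
  · rw [show (2 * a) • (x * mk 0 1 0 0 * y) = x * mk 0 a b c * y + x * mk 0 a (-b) (-c) * y by
      ext <;> simp <;> ring, h₁, h₂, add_zero]
  · rw [show (2 * b) • (x * mk 0 0 1 0 * y) = x * mk 0 a b c * y - x * mk 0 a (-b) c * y by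
      ext <;> simp <;> ring, h₁, h₃, sub_zero]
  · rw [show (2 * c) • (x * mk 0 0 0 1 * y) = x * mk 0 a (-b) c * y - x * mk 0 a (-b) (-c) * y by
      ext <;> simp <;> ring, h₃, h₂, sub_zero]

theorem eq_zero_of_forall_mul_mul_star_eq_zero (h2 : (2 : F) ≠ 0) {w : ℍ[F]}
    (hw : normSq w = 0) {P : F → F → F → Prop}
    (hneg : ∀ x y z, P x y z → P x (-y) z ∧ P x y (-z)) (hcyc : ∀ x y z, P x y z → P y z x)
    {a b c : F} (habc : P a b c) (hne : mk 0 a b c ≠ 0)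
    (hP : ∀ x y z, P x y z → w * mk 0 x y z * star w = 0) : w = 0 := by
  have key : ∀ x y z, P x y z → x • (w * mk 0 1 0 0 * star w) = 0 ∧
      y • (w * mk 0 0 1 0 * star w) = 0 ∧ z • (w * mk 0 0 0 1 * star w) = 0 := fun x y z h =>
    smul_mul_mul_eq_zero_of_sign_changes h2 (hP _ _ _ h)
      (hP _ _ _ (hneg _ _ _ (hneg _ _ _ h).1).2) (hP _ _ _ (hneg _ _ _ h).1)
  obtain ⟨a₁, b₂, c₃⟩ := key a b c habc
  obtain ⟨b₁, c₂, a₃⟩ := key b c a (hcyc _ _ _ habc)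
  obtain ⟨c₁, a₂, b₃⟩ := key c a b (hcyc _ _ _ (hcyc _ _ _ habc))
  have cancel : ∀ q : ℍ[F], a • q = 0 → b • q = 0 → c • q = 0 → q = 0 := by
    intro q ha hb hc
    by_contra hq
    simp only [smul_eq_zero, hq, or_false] at ha hb hc
    subst ha hb hc
    exact hne (by ext <;> simp)
  exact eq_zero_of_mul_basis_mul_star_eq_zero h2 hw (cancel _ a₁ b₁ c₁) (cancel _ a₂ b₂ c₂)
    (cancel _ a₃ b₃ c₃)

end Field

lemma exists_normSq_eq (n : ℕ) : ∃ w : ℍ[ℤ], normSq w = n := by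
  obtain ⟨r, s, t, u, h⟩ := Nat.sum_four_squares n
  exact ⟨mk r s t u, by rw [normSq_mk]; exact_mod_cast h⟩

lemma map_intCast_eq_zero_iff {l : ℕ} (q : ℍ[ℤ]) :
    map (Int.castRingHom (ZMod l)) q = 0 ↔
      (l : ℤ) ∣ q.re ∧ (l : ℤ) ∣ q.imI ∧ (l : ℤ) ∣ q.imJ ∧ (l : ℤ) ∣ q.imK := by
  simp [Quaternion.ext_iff, ZMod.intCast_zmod_eq_zero_iff_dvd]

lemma map_ne_zero_of_normSq_eq_prime {p : ℕ} (hp : p.Prime) {w : ℍ[ℤ]}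
    (hw : normSq w = p) : map (Int.castRingHom (ZMod p)) w ≠ 0 := by
  rw [Ne, map_intCast_eq_zero_iff]
  rintro ⟨h₁, h₂, h₃, h₄⟩
  have hsq : (p : ℤ) ^ 2 ∣ normSq w := by
    rw [normSq_def']
    exact dvd_add (dvd_add (dvd_add (pow_dvd_pow_of_dvd h₁ 2) (pow_dvd_pow_of_dvd h₂ 2))
      (pow_dvd_pow_of_dvd h₃ 2)) (pow_dvd_pow_of_dvd h₄ 2)
  rw [hw] at hsq
  have : p ^ 2 ∣ p ^ 1 := by rw [pow_one]; exact_mod_cast hsq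
  exact absurd ((Nat.pow_dvd_pow_iff_le_right hp.one_lt).mp this) (by norm_num)

end Quaternion

lemma gcd_gcd_eq_one_iff_forall_prime_map_mk_ne_zero {x y z : ℤ} :
    Int.gcd (Int.gcd x y) z = 1 ↔
      ∀ l : ℕ, l.Prime → map (Int.castRingHom (ZMod l)) (mk 0 x y z) ≠ 0 := by
  rw [Nat.eq_one_iff_not_exists_prime_dvd]
  refine forall₂_congr fun l _ => not_congr ?_
  rw [map_intCast_eq_zero_iff]
  simp [Int.dvd_gcd_iff, Int.natCast_dvd_natCast, and_assoc]

lemma gcd_mul_mul_star_eq_one {p : ℕ} (hp : p.Prime) {w : ℍ[ℤ]} (hw : normSq w = p)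
    {x y z : ℤ} (hxyz : Int.gcd (Int.gcd x y) z = 1)
    (hne : map (Int.castRingHom (ZMod p)) (w * mk 0 x y z * star w) ≠ 0) :
    Int.gcd (Int.gcd (w * mk 0 x y z * star w).imI (w * mk 0 x y z * star w).imJ)
      (w * mk 0 x y z * star w).imK = 1 := by
  set q := w * mk 0 x y z * star w with hq
  have hpure : mk 0 q.imI q.imJ q.imK = q := by
    ext
    · rw [re_mk, hq, re_mul_mul_star, re_mk, mul_zero]
    all_goals rfl
  rw [gcd_gcd_eq_one_iff_forall_prime_map_mk_ne_zero] at hxyz ⊢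
  intro l hl hzero
  have := Fact.mk hl
  rw [hpure, hq, map_mul, map_mul, Quaternion.map_star] at hzero
  rcases eq_zero_or_normSq_eq_zero_of_mul_mul_star_eq_zero hzero with h | h
  · exact hxyz l hl h
  · rw [normSq_map, hw, eq_intCast, Int.cast_natCast, ZMod.natCast_eq_zero_iff,
      Nat.prime_dvd_prime_iff_eq hl hp] at h
    subst h
    exact hne (by rw [map_mul, map_mul, Quaternion.map_star]; exact hzero)

def IsPrimitiveSumOfThreeSquares (m : ℤ) : Prop :=
  ∃ x y z : ℤ, Int.gcd (Int.gcd x y) z = 1 ∧ x ^ 2 + y ^ 2 + z ^ 2 = m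

lemma exists_primitive_map_mul_mul_star_ne_zero {p : ℕ} [Fact p.Prime] (hp2 : p ≠ 2)
    {w : ℍ[ℤ]} (hw : normSq w = p) {m : ℤ} (hm : IsPrimitiveSumOfThreeSquares m) :
    ∃ x y z : ℤ, Int.gcd (Int.gcd x y) z = 1 ∧ x ^ 2 + y ^ 2 + z ^ 2 = m ∧
      map (Int.castRingHom (ZMod p)) (w * mk 0 x y z * star w) ≠ 0 := by
  by_contra! H
  obtain ⟨a, b, c, habc, hsum⟩ := hm
  set φ := Int.castRingHom (ZMod p)
  refine map_ne_zero_of_normSq_eq_prime Fact.out hw (eq_zero_of_forall_mul_mul_star_eq_zero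
    (P := fun x' y' z' => ∃ x y z : ℤ, Int.gcd (Int.gcd x y) z = 1 ∧ x ^ 2 + y ^ 2 + z ^ 2 = m ∧
      φ x = x' ∧ φ y = y' ∧ φ z = z')
    (Ring.two_ne_zero (by rwa [ZMod.ringChar_zmod_n])) (by simp [hw])
    ?_ ?_ ⟨a, b, c, habc, hsum, rfl, rfl, rfl⟩ ?_ ?_)
  · rintro _ _ _ ⟨x, y, z, hg, hs, rfl, rfl, rfl⟩
    exact ⟨⟨x, -y, z, by simpa using hg, by linear_combination hs, rfl, map_neg .., rfl⟩,
      ⟨x, y, -z, by simpa using hg, by linear_combination hs, rfl, rfl, map_neg ..⟩⟩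
  · rintro _ _ _ ⟨x, y, z, hg, hs, rfl, rfl, rfl⟩
    exact ⟨y, z, x, by rwa [Int.gcd_comm, ← Int.gcd_assoc], by linear_combination hs,
      rfl, rfl, rfl⟩
  · simpa [φ] using gcd_gcd_eq_one_iff_forall_prime_map_mk_ne_zero.mp habc p Fact.out
  · rintro _ _ _ ⟨x, y, z, hg, hs, rfl, rfl, rfl⟩
    simpa [φ] using H x y z hg hs

theorem IsPrimitiveSumOfThreeSquares.prime_sq_mul {p : ℕ} (hp : p.Prime) (hp2 : p ≠ 2) {m : ℤ}
    (hm : IsPrimitiveSumOfThreeSquares m) : IsPrimitiveSumOfThreeSquares (p ^ 2 * m) := by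
  have := Fact.mk hp
  obtain ⟨w, hw⟩ := exists_normSq_eq p
  obtain ⟨x, y, z, hg, hs, hne⟩ := exists_primitive_map_mul_mul_star_ne_zero hp2 hw hm
  refine ⟨_, _, _, gcd_mul_mul_star_eq_one hp hw hg hne, ?_⟩
  have h := normSq_mul_mul_star w (mk 0 x y z)
  rw [normSq_mk, hw] at h
  simp only [normSq_def', re_mul_mul_star, re_mk] at h
  linear_combination h + (p : ℤ) ^ 2 * hs

theorem isPrimitiveSumOfThreeSquares_three_mul_sq {n : ℕ} (hn : Odd n) :
    IsPrimitiveSumOfThreeSquares (3 * n ^ 2) := by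
  induction n using induction_on_primes with
  | zero => exact absurd hn (by decide)
  | one => exact ⟨1, 1, 1, by decide, by norm_num⟩
  | prime_mul p a hp ih =>
    obtain ⟨hp_odd, ha_odd⟩ := Nat.odd_mul.mp hn
    have hp2 : p ≠ 2 := by rintro rfl; exact absurd hp_odd (by decide)
    convert (ih ha_odd).prime_sq_mul hp hp2 using 1
    push_cast; ring

lemma sq_add_sq_ne_three_mul_sq (y z : ℤ) {d : ℤ} (hd : Odd d) : y ^ 2 + z ^ 2 ≠ 3 * d ^ 2 := by
  obtain ⟨k, rfl⟩ := hd
  intro h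
  have h4 := congrArg (Int.cast : ℤ → ZMod 4) h
  push_cast at h4
  revert h4
  generalize (y : ZMod 4) = y'
  generalize (z : ZMod 4) = z'
  generalize (k : ZMod 4) = k'
  revert y' z' k'
  decide

lemma exists_le_le_of_perm {α : Type*} [LinearOrder α] {Q : α → α → α → Prop}
    (hswap : ∀ x y z, Q x y z → Q y x z) (hcyc : ∀ x y z, Q x y z → Q y z x) {x y z : α}
    (h : Q x y z) : ∃ a b c, a ≤ b ∧ b ≤ c ∧ Q a b c := by
  have := hcyc _ _ _ h
  have := hcyc _ _ _ (hcyc _ _ _ h)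
  have := hswap _ _ _ h
  have := hswap _ _ _ (hcyc _ _ _ h)
  have := hswap _ _ _ (hcyc _ _ _ (hcyc _ _ _ h))
  rcases le_total x y with _ | _ <;> rcases le_total y z with _ | _ <;>
    rcases le_total x z with _ | _ <;>
    first
    | exact ⟨x, y, z, ‹_›, ‹_›, ‹_›⟩ | exact ⟨y, z, x, ‹_›, ‹_›, ‹_›⟩
    | exact ⟨z, x, y, ‹_›, ‹_›, ‹_›⟩ | exact ⟨y, x, z, ‹_›, ‹_›, ‹_›⟩
    | exact ⟨z, y, x, ‹_›, ‹_›, ‹_›⟩ | exact ⟨x, z, y, ‹_›, ‹_›, ‹_›⟩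

theorem exists_solution_three_squares_general (d : ℤ) (hd : Odd d) :
    ∃ a b c : ℤ, 0 < a ∧ a ≤ b ∧ b ≤ c ∧ Int.gcd (Int.gcd a b) c = 1 ∧
      a ^ 2 + b ^ 2 + c ^ 2 = 3 * d ^ 2 := by
  obtain ⟨x, y, z, hg, hs⟩ : IsPrimitiveSumOfThreeSquares (3 * d ^ 2) := by
    simpa using isPrimitiveSumOfThreeSquares_three_mul_sq (Int.natAbs_odd.mpr hd)
  have hx : x ≠ 0 := by
    rintro rfl; exact sq_add_sq_ne_three_mul_sq y z hd (by linear_combination hs)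
  have hy : y ≠ 0 := by
    rintro rfl; exact sq_add_sq_ne_three_mul_sq x z hd (by linear_combination hs)
  have hz : z ≠ 0 := by
    rintro rfl; exact sq_add_sq_ne_three_mul_sq x y hd (by linear_combination hs)
  obtain ⟨a, b, c, hab, hbc, ha, -, -, hg, hs⟩ := exists_le_le_of_perm
    (Q := fun a b c => 0 < a ∧ 0 < b ∧ 0 < c ∧ Int.gcd (Int.gcd a b) c = 1 ∧
      a ^ 2 + b ^ 2 + c ^ 2 = 3 * d ^ 2)
    (fun a b c ⟨ha, hb, hc, hg, hs⟩ =>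
      ⟨hb, ha, hc, by rwa [Int.gcd_comm b a], by linear_combination hs⟩)
    (fun a b c ⟨ha, hb, hc, hg, hs⟩ =>
      ⟨hb, hc, ha, by rwa [Int.gcd_comm, ← Int.gcd_assoc], by linear_combination hs⟩)
    (x := |x|) (y := |y|) (z := |z|)
    ⟨abs_pos.mpr hx, abs_pos.mpr hy, abs_pos.mpr hz, by simpa [Int.gcd, Int.natAbs_abs] using hg,
      by simpa using hs⟩
  exact ⟨a, b, c, ha, hab, hbc, hg, hs⟩

/-- For every odd integer `d ≥ 1`, the equation `a² + b² + c² = 3d²` has a solution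
in integers with `0 < a ≤ b ≤ c` and `gcd(a,b,c) = 1`. -/
theorem exists_solution_three_squares (d : ℤ) (hd : Odd d) (hd1 : 1 ≤ d) :
    ∃ a b c : ℤ, 0 < a ∧ a ≤ b ∧ b ≤ c ∧ Int.gcd (Int.gcd a b) c = 1 ∧
      a ^ 2 + b ^ 2 + c ^ 2 = 3 * d ^ 2 :=
  exists_solution_three_squares_general d hd
end

section
/- For every integer n ≥ 4, the number of cubes in ℤ³ all of whose vertices lie in the grid {0,1,...,n}³ is strictly less than the number of regular tetrahedra in ℤ³ all of whose vertices lie in {0,1,...,n}³. -/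
/-- A point of `ℤ³` lies in the grid `{0, 1, ..., n}³`. -/
def InGrid (n : ℤ) (p : Fin 3 → ℤ) : Prop := ∀ i, 0 ≤ p i ∧ p i ≤ n

def Rcube (T : Set (Fin 3 → ℤ)) : Set (Fin 3 → ℤ) :=
  T ∪ {x | ∃ a b c d, a ∈ T ∧ b ∈ T ∧ c ∈ T ∧ d ∈ T ∧
    a ≠ b ∧ a ≠ c ∧ a ≠ d ∧ b ≠ c ∧ b ≠ d ∧ c ≠ d ∧ (2:ℤ) • x = a + b + c - d}

lemma dot3_self_nonneg (x : Fin 3 → ℤ) : 0 ≤ dot3 x x := by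
  simp only [dot3, Fin.sum_univ_three]
  nlinarith [sq_nonneg (x 0), sq_nonneg (x 1), sq_nonneg (x 2)]

lemma distSq_self (u : Fin 3 → ℤ) : distSq u u = 0 := by
  simp [distSq, dot3]

lemma ne_of_distSq_ne {u w : Fin 3 → ℤ} (h : distSq u w ≠ 0) : u ≠ w :=
  fun he => h (he ▸ distSq_self u)

lemma quad (e1 e2 e3 : Fin 3 → ℤ) (h12 : dot3 e1 e2 = 0) (h13 : dot3 e1 e3 = 0)
    (h23 : dot3 e2 e3 = 0) (h1 : dot3 e1 e1 = dot3 e2 e2) (h2 : dot3 e2 e2 = dot3 e3 e3)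
    (α β γ : ℤ) :
    dot3 (α•e1 + β•e2 + γ•e3) (α•e1 + β•e2 + γ•e3) = (α^2 + β^2 + γ^2) * dot3 e1 e1 := by
  simp only [dot3, Fin.sum_univ_three, Pi.add_apply, Pi.smul_apply, smul_eq_mul] at *
  linear_combination (2*α*β)*h12 + (2*α*γ)*h13 + (2*β*γ)*h23 - β^2*h1 - γ^2*(h1.trans h2)

lemma distSq_pts (v e1 e2 e3 : Fin 3 → ℤ) (h12 : dot3 e1 e2 = 0) (h13 : dot3 e1 e3 = 0)
    (h23 : dot3 e2 e3 = 0) (h1 : dot3 e1 e1 = dot3 e2 e2) (h2 : dot3 e2 e2 = dot3 e3 e3)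
    (a b c a' b' c' : ℤ) :
    distSq (v + a•e1 + b•e2 + c•e3) (v + a'•e1 + b'•e2 + c'•e3)
      = ((a-a')^2 + (b-b')^2 + (c-c')^2) * dot3 e1 e1 := by
  have hdiff : (v + a•e1 + b•e2 + c•e3) - (v + a'•e1 + b'•e2 + c'•e3)
      = (a-a')•e1 + (b-b')•e2 + (c-c')•e3 := by module
  rw [distSq, hdiff]; exact quad e1 e2 e3 h12 h13 h23 h1 h2 _ _ _

lemma two_smul_cancel {x y : Fin 3 → ℤ} (h : (2:ℤ) • x = (2:ℤ) • y) : x = y := by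
  funext i
  have := congrFun h i
  simp only [Pi.smul_apply, smul_eq_mul] at this
  omega

lemma ncard_four {α : Type*} {a b c d : α} (hab : a ≠ b) (hac : a ≠ c) (had : a ≠ d)
    (hbc : b ≠ c) (hbd : b ≠ d) (hcd : c ≠ d) : ({a, b, c, d} : Set α).ncard = 4 := by
  rw [Set.ncard_insert_of_notMem (by simp [hab, hac, had]),
      Set.ncard_insert_of_notMem (by simp [hbc, hbd]),
      Set.ncard_insert_of_notMem (by simp [hcd]), Set.ncard_singleton]

lemma quad_sum {M : Type*} [AddCommGroup M] {p1 p2 p3 p4 a b c d : M}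
    (h12 : p1 ≠ p2) (h13 : p1 ≠ p3) (h14 : p1 ≠ p4) (h23 : p2 ≠ p3) (h24 : p2 ≠ p4)
    (h34 : p3 ≠ p4)
    (ha : a ∈ ({p1, p2, p3, p4} : Set M)) (hb : b ∈ ({p1, p2, p3, p4} : Set M))
    (hc : c ∈ ({p1, p2, p3, p4} : Set M)) (hd : d ∈ ({p1, p2, p3, p4} : Set M))
    (hab : a ≠ b) (hac : a ≠ c) (had : a ≠ d) (hbc : b ≠ c) (hbd : b ≠ d) (hcd : c ≠ d) :
    a + b + c + d = p1 + p2 + p3 + p4 := by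
  simp only [Set.mem_insert_iff, Set.mem_singleton_iff] at ha hb hc hd
  rcases ha with rfl|rfl|rfl|rfl <;> rcases hb with rfl|rfl|rfl|rfl <;>
    rcases hc with rfl|rfl|rfl|rfl <;> rcases hd with rfl|rfl|rfl|rfl <;>
    first
      | abel1
      | (exfalso; simp_all)

lemma Rcube_eq_of {C T : Set (Fin 3 → ℤ)} {q1 q2 q3 q4 w : Fin 3 → ℤ}
    (hT : T = {q1, q2, q3, q4})
    (h12 : q1 ≠ q2) (h13 : q1 ≠ q3) (h14 : q1 ≠ q4) (h23 : q2 ≠ q3) (h24 : q2 ≠ q4)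
    (h34 : q3 ≠ q4)
    (hsum : q1 + q2 + q3 + q4 = (2:ℤ) • w)
    (hCompl : ∀ p, p ∈ C ↔ p ∈ T ∨ w - p ∈ T) :
    Rcube T = C := by
  ext x
  constructor
  · rintro (hx | ⟨a, b, c, d, ha, hb, hc, hd, hab, hac, had, hbc, hbd, hcd, h2x⟩)
    · exact (hCompl x).mpr (Or.inl hx)
    · rw [hT] at ha hb hc hd
      have hsum4 : a + b + c + d = q1 + q2 + q3 + q4 :=
        quad_sum h12 h13 h14 h23 h24 h34 ha hb hc hd hab hac had hbc hbd hcd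
      have h2 : (2:ℤ) • x = (2:ℤ) • (w - d) := by
        calc (2:ℤ) • x = a + b + c - d := h2x
          _ = (a + b + c + d) - (2:ℤ) • d := by abel
          _ = (q1 + q2 + q3 + q4) - (2:ℤ) • d := by rw [hsum4]
          _ = (2:ℤ) • w - (2:ℤ) • d := by rw [hsum]
          _ = (2:ℤ) • (w - d) := by abel
      have hxv : x = w - d := two_smul_cancel h2
      have hwx : w - x = d := by rw [hxv]; abel
      refine (hCompl x).mpr (Or.inr ?_)
      rw [hwx, hT]; exact hd
  · intro hp
    rcases (hCompl x).mp hp with h | h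
    · exact Or.inl h
    · rw [hT] at h
      simp only [Set.mem_insert_iff, Set.mem_singleton_iff] at h
      have base : ∀ q : Fin 3 → ℤ, w - x = q →
          (2:ℤ) • x = (q1 + q2 + q3 + q4) - (2:ℤ) • q := by
        intro q hq
        calc (2:ℤ) • x = (2:ℤ) • w - (2:ℤ) • (w - x) := by abel
          _ = (q1 + q2 + q3 + q4) - (2:ℤ) • (w - x) := by rw [hsum]
          _ = (q1 + q2 + q3 + q4) - (2:ℤ) • q := by rw [hq]
      rcases h with h | h | h | h
      · refine Or.inr ⟨q2, q3, q4, q1, ?_, ?_, ?_, ?_, h23, h24, h12.symm, h34, h13.symm,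
          h14.symm, ?_⟩ <;> first | (rw [hT]; simp) | (rw [base q1 h]; abel)
      · refine Or.inr ⟨q1, q3, q4, q2, ?_, ?_, ?_, ?_, h13, h14, h12, h34, h23.symm,
          h24.symm, ?_⟩ <;> first | (rw [hT]; simp) | (rw [base q2 h]; abel)
      · refine Or.inr ⟨q1, q2, q4, q3, ?_, ?_, ?_, ?_, h12, h14, h13, h24, h23,
          h34.symm, ?_⟩ <;> first | (rw [hT]; simp) | (rw [base q3 h]; abel)
      · refine Or.inr ⟨q1, q2, q3, q4, ?_, ?_, ?_, ?_, h12, h13, h14, h23, h24,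
          h34, ?_⟩ <;> first | (rw [hT]; simp) | (rw [base q4 h]; abel)

set_option maxHeartbeats 1000000 in
lemma cube_two_tets {C : Set (Fin 3 → ℤ)} (h : IsCube C) :
    ∃ T1 T2 : Set (Fin 3 → ℤ), IsRegularTetrahedron T1 ∧ IsRegularTetrahedron T2 ∧
      T1 ≠ T2 ∧ T1 ⊆ C ∧ T2 ⊆ C ∧ Rcube T1 = C ∧ Rcube T2 = C := by
  obtain ⟨v, e1, e2, e3, h12, h13, h23, hEq1, hEq2, hne, hC⟩ := h
  set P : ℤ → ℤ → ℤ → (Fin 3 → ℤ) := fun a b c => v + a • e1 + b • e2 + c • e3 with hP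
  have hPapp : ∀ a b c : ℤ, P a b c = v + a • e1 + b • e2 + c • e3 := fun _ _ _ => rfl
  have hmem : ∀ a b c : ℤ, a ∈ ({0,1} : Set ℤ) → b ∈ ({0,1} : Set ℤ) → c ∈ ({0,1} : Set ℤ) →
      P a b c ∈ C := by
    intro a b c ha hb hc
    rw [hC]; exact ⟨a, b, c, ha, hb, hc, rfl⟩
  have key : ∀ a b c a' b' c' : ℤ, distSq (P a b c) (P a' b' c')
      = ((a-a')^2 + (b-b')^2 + (c-c')^2) * dot3 e1 e1 :=
    fun a b c a' b' c' => distSq_pts v e1 e2 e3 h12 h13 h23 hEq1 hEq2 a b c a' b' c'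
  have hPne : ∀ a b c a' b' c' : ℤ, ((a-a')^2 + (b-b')^2 + (c-c')^2) ≠ 0 →
      P a b c ≠ P a' b' c' := by
    intro a b c a' b' c' hco
    exact ne_of_distSq_ne (by rw [key]; exact mul_ne_zero hco hne)
  have hm : 0 < dot3 e1 e1 := lt_of_le_of_ne (dot3_self_nonneg e1) (Ne.symm hne)
  -- even vertices
  have hdA1 : P 0 0 0 ≠ P 1 1 0 := hPne _ _ _ _ _ _ (by norm_num)
  have hdA2 : P 0 0 0 ≠ P 1 0 1 := hPne _ _ _ _ _ _ (by norm_num)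
  have hdA3 : P 0 0 0 ≠ P 0 1 1 := hPne _ _ _ _ _ _ (by norm_num)
  have hdA4 : P 1 1 0 ≠ P 1 0 1 := hPne _ _ _ _ _ _ (by norm_num)
  have hdA5 : P 1 1 0 ≠ P 0 1 1 := hPne _ _ _ _ _ _ (by norm_num)
  have hdA6 : P 1 0 1 ≠ P 0 1 1 := hPne _ _ _ _ _ _ (by norm_num)
  -- odd vertices
  have hdB1 : P 1 0 0 ≠ P 0 1 0 := hPne _ _ _ _ _ _ (by norm_num)
  have hdB2 : P 1 0 0 ≠ P 0 0 1 := hPne _ _ _ _ _ _ (by norm_num)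
  have hdB3 : P 1 0 0 ≠ P 1 1 1 := hPne _ _ _ _ _ _ (by norm_num)
  have hdB4 : P 0 1 0 ≠ P 0 0 1 := hPne _ _ _ _ _ _ (by norm_num)
  have hdB5 : P 0 1 0 ≠ P 1 1 1 := hPne _ _ _ _ _ _ (by norm_num)
  have hdB6 : P 0 0 1 ≠ P 1 1 1 := hPne _ _ _ _ _ _ (by norm_num)
  refine ⟨{P 0 0 0, P 1 1 0, P 1 0 1, P 0 1 1}, {P 1 0 0, P 0 1 0, P 0 0 1, P 1 1 1},
    ?_, ?_, ?_, ?_, ?_, ?_, ?_⟩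
  · refine ⟨ncard_four hdA1 hdA2 hdA3 hdA4 hdA5 hdA6, 2 * dot3 e1 e1, by linarith, ?_⟩
    intro u hu w hw huw
    simp only [Set.mem_insert_iff, Set.mem_singleton_iff] at hu hw
    rcases hu with rfl|rfl|rfl|rfl <;> rcases hw with rfl|rfl|rfl|rfl <;>
      first
        | exact absurd rfl huw
        | (rw [key]; ring)
  · refine ⟨ncard_four hdB1 hdB2 hdB3 hdB4 hdB5 hdB6, 2 * dot3 e1 e1, by linarith, ?_⟩
    intro u hu w hw huw
    simp only [Set.mem_insert_iff, Set.mem_singleton_iff] at hu hw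
    rcases hu with rfl|rfl|rfl|rfl <;> rcases hw with rfl|rfl|rfl|rfl <;>
      first
        | exact absurd rfl huw
        | (rw [key]; ring)
  · intro hT
    have : P 0 0 0 ∈ ({P 1 0 0, P 0 1 0, P 0 0 1, P 1 1 1} : Set (Fin 3 → ℤ)) := by
      rw [← hT]; left; rfl
    simp only [Set.mem_insert_iff, Set.mem_singleton_iff] at this
    rcases this with h'|h'|h'|h' <;>
      [exact hPne 0 0 0 1 0 0 (by norm_num) h'; exact hPne 0 0 0 0 1 0 (by norm_num) h';
       exact hPne 0 0 0 0 0 1 (by norm_num) h'; exact hPne 0 0 0 1 1 1 (by norm_num) h']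
  · intro x hx
    simp only [Set.mem_insert_iff, Set.mem_singleton_iff] at hx
    rcases hx with rfl|rfl|rfl|rfl <;> exact hmem _ _ _ (by norm_num) (by norm_num) (by norm_num)
  · intro x hx
    simp only [Set.mem_insert_iff, Set.mem_singleton_iff] at hx
    rcases hx with rfl|rfl|rfl|rfl <;> exact hmem _ _ _ (by norm_num) (by norm_num) (by norm_num)
  · -- Rcube T1 = C
    refine Rcube_eq_of rfl hdA1 hdA2 hdA3 hdA4 hdA5 hdA6
      (w := v + v + e1 + e2 + e3) (by simp only [hPapp]; module) ?_
    intro p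
    constructor
    · intro hp; rw [hC] at hp
      obtain ⟨a, b, c, ha, hb, hc, hpe⟩ := hp
      simp only [Set.mem_insert_iff, Set.mem_singleton_iff] at ha hb hc
      rcases ha with rfl|rfl <;> rcases hb with rfl|rfl <;> rcases hc with rfl|rfl <;>
        simp only [Set.mem_insert_iff, Set.mem_singleton_iff]
      -- (0,0,0) even
      · exact Or.inl (Or.inl (by rw [hpe, hPapp]))
      -- (0,0,1) odd : w - p = P 1 1 0
      · refine Or.inr (Or.inr (Or.inl ?_)); rw [hpe, hPapp]; module
      -- (0,1,0) odd : w - p = P 1 0 1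
      · refine Or.inr (Or.inr (Or.inr (Or.inl ?_))); rw [hpe, hPapp]; module
      -- (0,1,1) even
      · refine Or.inl (Or.inr (Or.inr (Or.inr ?_))); rw [hpe, hPapp]
      -- (1,0,0) odd : w - p = P 0 1 1
      · refine Or.inr (Or.inr (Or.inr (Or.inr ?_))); rw [hpe, hPapp]; module
      -- (1,0,1) even
      · refine Or.inl (Or.inr (Or.inr (Or.inl ?_))); rw [hpe, hPapp]
      -- (1,1,0) even
      · refine Or.inl (Or.inr (Or.inl ?_)); rw [hpe, hPapp]
      -- (1,1,1) odd : w - p = P 0 0 0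
      · refine Or.inr (Or.inl ?_); rw [hpe, hPapp]; module
    · rintro (hp | hp) <;>
        simp only [Set.mem_insert_iff, Set.mem_singleton_iff] at hp
      · rcases hp with rfl|rfl|rfl|rfl <;>
          exact hmem _ _ _ (by norm_num) (by norm_num) (by norm_num)
      · rcases hp with h|h|h|h
        · have hpv : p = v + v + e1 + e2 + e3 - P 0 0 0 := by rw [← h]; abel
          rw [hC]
          exact ⟨1, 1, 1, by norm_num, by norm_num, by norm_num,
            by rw [hpv, hPapp]; module⟩
        · have hpv : p = v + v + e1 + e2 + e3 - P 1 1 0 := by rw [← h]; abel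
          rw [hC]
          exact ⟨0, 0, 1, by norm_num, by norm_num, by norm_num,
            by rw [hpv, hPapp]; module⟩
        · have hpv : p = v + v + e1 + e2 + e3 - P 1 0 1 := by rw [← h]; abel
          rw [hC]
          exact ⟨0, 1, 0, by norm_num, by norm_num, by norm_num,
            by rw [hpv, hPapp]; module⟩
        · have hpv : p = v + v + e1 + e2 + e3 - P 0 1 1 := by rw [← h]; abel
          rw [hC]
          exact ⟨1, 0, 0, by norm_num, by norm_num, by norm_num,
            by rw [hpv, hPapp]; module⟩
  · -- Rcube T2 = C
    refine Rcube_eq_of rfl hdB1 hdB2 hdB3 hdB4 hdB5 hdB6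
      (w := v + v + e1 + e2 + e3) (by simp only [hPapp]; module) ?_
    intro p
    constructor
    · intro hp; rw [hC] at hp
      obtain ⟨a, b, c, ha, hb, hc, hpe⟩ := hp
      simp only [Set.mem_insert_iff, Set.mem_singleton_iff] at ha hb hc
      rcases ha with rfl|rfl <;> rcases hb with rfl|rfl <;> rcases hc with rfl|rfl <;>
        simp only [Set.mem_insert_iff, Set.mem_singleton_iff]
      -- (0,0,0) : w - p = P 1 1 1
      · refine Or.inr (Or.inr (Or.inr (Or.inr ?_))); rw [hpe, hPapp]; module
      -- (0,0,1) ∈ T2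
      · refine Or.inl (Or.inr (Or.inr (Or.inl ?_))); rw [hpe, hPapp]
      -- (0,1,0) ∈ T2
      · refine Or.inl (Or.inr (Or.inl ?_)); rw [hpe, hPapp]
      -- (0,1,1) : w - p = P 1 0 0
      · refine Or.inr (Or.inl ?_); rw [hpe, hPapp]; module
      -- (1,0,0) ∈ T2
      · exact Or.inl (Or.inl (by rw [hpe, hPapp]))
      -- (1,0,1) : w - p = P 0 1 0
      · refine Or.inr (Or.inr (Or.inl ?_)); rw [hpe, hPapp]; module
      -- (1,1,0) : w - p = P 0 0 1
      · refine Or.inr (Or.inr (Or.inr (Or.inl ?_))); rw [hpe, hPapp]; module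
      -- (1,1,1) ∈ T2
      · refine Or.inl (Or.inr (Or.inr (Or.inr ?_))); rw [hpe, hPapp]
    · rintro (hp | hp) <;>
        simp only [Set.mem_insert_iff, Set.mem_singleton_iff] at hp
      · rcases hp with rfl|rfl|rfl|rfl <;>
          exact hmem _ _ _ (by norm_num) (by norm_num) (by norm_num)
      · rcases hp with h|h|h|h
        · have hpv : p = v + v + e1 + e2 + e3 - P 1 0 0 := by rw [← h]; abel
          rw [hC]
          exact ⟨0, 1, 1, by norm_num, by norm_num, by norm_num,
            by rw [hpv, hPapp]; module⟩
        · have hpv : p = v + v + e1 + e2 + e3 - P 0 1 0 := by rw [← h]; abel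
          rw [hC]
          exact ⟨1, 0, 1, by norm_num, by norm_num, by norm_num,
            by rw [hpv, hPapp]; module⟩
        · have hpv : p = v + v + e1 + e2 + e3 - P 0 0 1 := by rw [← h]; abel
          rw [hC]
          exact ⟨1, 1, 0, by norm_num, by norm_num, by norm_num,
            by rw [hpv, hPapp]; module⟩
        · have hpv : p = v + v + e1 + e2 + e3 - P 1 1 1 := by rw [← h]; abel
          rw [hC]
          exact ⟨0, 0, 0, by norm_num, by norm_num, by norm_num,
            by rw [hpv, hPapp]; module⟩


/-- For `n ≥ 4`, there are strictly fewer cubes with vertices in `{0,...,n}³` than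
regular tetrahedra with vertices in `{0,...,n}³`. -/
theorem cubes_lt_tetrahedra (n : ℤ) (hn : 4 ≤ n) :
    {C : Set (Fin 3 → ℤ) | IsCube C ∧ ∀ p ∈ C, InGrid n p}.ncard <
    {T : Set (Fin 3 → ℤ) | IsRegularTetrahedron T ∧ ∀ p ∈ T, InGrid n p}.ncard := by
  classical
  set K := {C : Set (Fin 3 → ℤ) | IsCube C ∧ ∀ p ∈ C, InGrid n p} with hKdef
  set 𝒯 := {T : Set (Fin 3 → ℤ) | IsRegularTetrahedron T ∧ ∀ p ∈ T, InGrid n p} with hTdef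
  have hgridfin : {p : Fin 3 → ℤ | InGrid n p}.Finite := by
    refine (Set.Finite.pi (fun _ : Fin 3 => Set.finite_Icc (0:ℤ) n)).subset ?_
    intro p hp
    simp only [Set.mem_pi, Set.mem_univ, Set.mem_Icc, forall_true_left]
    intro i; exact (hp i)
  have hKfin : K.Finite :=
    hgridfin.finite_subsets.subset (fun C hC p hp => hC.2 p hp)
  have hTfin : 𝒯.Finite :=
    hgridfin.finite_subsets.subset (fun T hT p hp => hT.2 p hp)
  -- the unit cube
  have hunit : ({p | ∃ ε₁ ε₂ ε₃ : ℤ, ε₁ ∈ ({0, 1} : Set ℤ) ∧ ε₂ ∈ ({0, 1} : Set ℤ) ∧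
      ε₃ ∈ ({0, 1} : Set ℤ) ∧ p = 0 + ε₁ • ![1,0,0] + ε₂ • ![0,1,0] + ε₃ • ![0,0,1]}
        : Set (Fin 3 → ℤ)) ∈ K := by
    constructor
    · exact ⟨0, ![1,0,0], ![0,1,0], ![0,0,1],
        by simp [dot3, Fin.sum_univ_three],
        by simp [dot3, Fin.sum_univ_three],
        by simp [dot3, Fin.sum_univ_three],
        by simp [dot3, Fin.sum_univ_three],
        by simp [dot3, Fin.sum_univ_three],
        by simp [dot3, Fin.sum_univ_three], rfl⟩
    · rintro p ⟨a, b, c, ha, hb, hc, rfl⟩ i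
      simp only [Set.mem_insert_iff, Set.mem_singleton_iff] at ha hb hc
      fin_cases i <;>
        rcases ha with rfl|rfl <;> rcases hb with rfl|rfl <;> rcases hc with rfl|rfl <;>
          simp <;> omega
  -- counting
  have main : ∀ Cc ∈ hKfin.toFinset, ∃ t1 t2 : Set (Fin 3 → ℤ),
      t1 ∈ hTfin.toFinset ∧ t2 ∈ hTfin.toFinset ∧ t1 ≠ t2 ∧ Rcube t1 = Cc ∧ Rcube t2 = Cc := by
    intro Cc hc
    rw [Set.Finite.mem_toFinset] at hc
    obtain ⟨t1, t2, ht1, ht2, hne, hs1, hs2, hr1, hr2⟩ := cube_two_tets hc.1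
    exact ⟨t1, t2,
      (Set.Finite.mem_toFinset _).mpr ⟨ht1, fun p hp => hc.2 p (hs1 hp)⟩,
      (Set.Finite.mem_toFinset _).mpr ⟨ht2, fun p hp => hc.2 p (hs2 hp)⟩,
      hne, hr1, hr2⟩
  set B : Set (Fin 3 → ℤ) → Finset (Set (Fin 3 → ℤ)) :=
    fun Cc => hTfin.toFinset.filter (fun t => Rcube t = Cc) with hB
  have hdisj : ∀ x ∈ hKfin.toFinset, ∀ y ∈ hKfin.toFinset, x ≠ y → Disjoint (B x) (B y) := by
    intro x _ y _ hxy
    rw [Finset.disjoint_left]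
    intro t htx hty
    rw [hB] at htx hty
    exact hxy ((Finset.mem_filter.mp htx).2.symm.trans (Finset.mem_filter.mp hty).2)
  have hcard2 : ∀ Cc ∈ hKfin.toFinset, 2 ≤ (B Cc).card := by
    intro Cc hc
    obtain ⟨t1, t2, ht1, ht2, hne, hr1, hr2⟩ := main Cc hc
    have hsub : ({t1, t2} : Finset (Set (Fin 3 → ℤ))) ⊆ B Cc := by
      intro t ht
      rcases Finset.mem_insert.mp ht with rfl | ht
      · exact Finset.mem_filter.mpr ⟨ht1, hr1⟩
      · rw [Finset.mem_singleton.mp ht]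
        exact Finset.mem_filter.mpr ⟨ht2, hr2⟩
    calc 2 = ({t1, t2} : Finset (Set (Fin 3 → ℤ))).card := (Finset.card_pair hne).symm
      _ ≤ (B Cc).card := Finset.card_le_card hsub
  have hsum : 2 * hKfin.toFinset.card ≤ hTfin.toFinset.card := by
    calc 2 * hKfin.toFinset.card = ∑ _Cc ∈ hKfin.toFinset, 2 := by
          rw [Finset.sum_const, smul_eq_mul, mul_comm]
      _ ≤ ∑ Cc ∈ hKfin.toFinset, (B Cc).card := Finset.sum_le_sum hcard2
      _ = (hKfin.toFinset.biUnion B).card := (Finset.card_biUnion hdisj).symm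
      _ ≤ hTfin.toFinset.card := by
          apply Finset.card_le_card
          intro t ht
          obtain ⟨Cc, _, htc⟩ := Finset.mem_biUnion.mp ht
          exact (Finset.mem_filter.mp htc).1
  have h1 : 1 ≤ hKfin.toFinset.card :=
    Finset.card_pos.mpr ⟨_, (Set.Finite.mem_toFinset _).mpr hunit⟩
  have hKcard : K.ncard = hKfin.toFinset.card := Set.ncard_eq_toFinset_card _ hKfin
  have hTcard : 𝒯.ncard = hTfin.toFinset.card := Set.ncard_eq_toFinset_card _ hTfin
  rw [hKcard, hTcard]
  omega
end
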